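/- arXiv:math/0606334 — 5 statements merged into one kernel-verified Lean document; each statement's English description precedes it below -/
import Mathlib

section
/- For left and right orthonormal matrix polynomials on the unit circle, the leading and constant coefficients satisfy L_{n,0}* L_{n,n} = K_{n,n} K_{n,0}*, so that the reflection coefficient H_n = (L_{n,n}*)^{-1} K_{n,0} = L_{n,0} (K_{n,n}*)^{-1} is well-defined. -/
open MeasureTheory Matrix Filter Topology Complex Finset
open scoped ComplexOrder

/-- Entrywise (Bochner) integral of a matrix-valued function against a measure on `ℝ`
(representing a matrix measure on the unit circle via the angle `θ`). -/
noncomputable def matInt {p : ℕ} (μ : Measure ℝ) (f : ℝ → Matrix (Fin p) (Fin p) ℂ) :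
    Matrix (Fin p) (Fin p) ℂ :=
  Matrix.of fun i j => ∫ θ, f θ i j ∂μ

/-- Entrywise integral of a matrix-valued function over `[0, 2π]` with respect to `dθ`. -/
noncomputable def matIntI {p : ℕ} (f : ℝ → Matrix (Fin p) (Fin p) ℂ) :
    Matrix (Fin p) (Fin p) ℂ :=
  Matrix.of fun i j => ∫ θ in (0:ℝ)..(2 * Real.pi), f θ i j

/-- The spectral norm (operator 2-norm) of a complex matrix. -/
noncomputable def sNorm {p : ℕ} (M : Matrix (Fin p) (Fin p) ℂ) : ℝ :=
  ‖LinearMap.toContinuousLinearMap (Matrix.toEuclideanLin M)‖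

open ComplexConjugate

/-! On the unit circle `z̄ⁿ φ_n^R(z) = (φ̃_n^R(z))*`, where the reversed polynomial `φ̃_n^R` has
degree `n` and top coefficient `K_{n,0}*`. Since the leading coefficients are invertible,
`φ̃_n^R` is a left combination of `φ_0^L, …, φ_n^L`, and left orthonormality turns
`H = ∫ z̄ⁿ φ_n^L dρ φ_n^R` into `L_{n,n}* H = K_{n,0}`. Expanding `φ̃_n^L` in the right basis
gives `H K_{n,n}* = L_{n,0}` in the same way, and both claims follow from these two identities. -/

theorem exists_sum_pow_smul_eq_sum_mul_left {S A : Type*} [CommSemiring S] [Ring A]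
    [Algebra S A]
    (a : ℕ → ℕ → A) (ha : ∀ m, IsUnit (a m m)) (n : ℕ) (b : ℕ → A) :
    ∃ c : ℕ → A, c n * a n n = b n ∧ ∀ z : S,
      ∑ j ∈ range (n + 1), z ^ j • b j =
        ∑ m ∈ range (n + 1), c m * ∑ j ∈ range (m + 1), z ^ j • a m j := by
  induction n generalizing b with
  | zero =>
    obtain ⟨u, hu⟩ := ha 0
    refine ⟨fun _ => b 0 * ↑u⁻¹, by simp [← hu], fun z => ?_⟩
    simp [← hu]
  | succ n ih =>
    obtain ⟨u, hu⟩ := ha (n + 1)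
    set top := b (n + 1) * ↑u⁻¹
    have htop : top * a (n + 1) (n + 1) = b (n + 1) := by simp [top, ← hu]
    obtain ⟨c, -, hc⟩ := ih fun j => b j - top * a (n + 1) j
    refine ⟨Function.update c (n + 1) top, by simpa using htop, fun z => ?_⟩
    calc ∑ j ∈ range (n + 2), z ^ j • b j
        = ∑ j ∈ range (n + 1), z ^ j • (b j - top * a (n + 1) j) +
            top * ∑ j ∈ range (n + 2), z ^ j • a (n + 1) j := by
          rw [sum_range_succ _ (n + 1), sum_range_succ (fun j => z ^ j • a (n + 1) j) (n + 1),
            mul_add, mul_smul_comm, htop, mul_sum, ← add_assoc, ← sum_add_distrib]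
          simp_rw [mul_smul_comm, smul_sub, sub_add_cancel]
      _ = _ := by
          rw [hc, sum_range_succ (fun m => Function.update c (n + 1) top m * _) (n + 1),
            Function.update_self]
          congr 1
          refine sum_congr rfl fun m hm => ?_
          rw [Function.update_of_ne (by simp at hm; omega)]

theorem exists_sum_pow_smul_eq_sum_mul_right {S A : Type*} [CommSemiring S] [Ring A]
    [Algebra S A]
    (a : ℕ → ℕ → A) (ha : ∀ m, IsUnit (a m m)) (n : ℕ) (b : ℕ → A) :
    ∃ c : ℕ → A, a n n * c n = b n ∧ ∀ z : S,
      ∑ j ∈ range (n + 1), z ^ j • b j =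
        ∑ m ∈ range (n + 1), (∑ j ∈ range (m + 1), z ^ j • a m j) * c m := by
  obtain ⟨c, hcn, hc⟩ := exists_sum_pow_smul_eq_sum_mul_left (S := S)
    (fun m j => MulOpposite.op (a m j)) (fun m => (ha m).op) n (MulOpposite.op ∘ b)
  refine ⟨MulOpposite.unop ∘ c, congrArg MulOpposite.unop hcn, fun z => ?_⟩
  simpa using congrArg MulOpposite.unop (hc z)

theorem conjTranspose_sum_range_reverse {m l : Type*} {z : ℂ} (hz : conj z * z = 1)
    (a : ℕ → Matrix m l ℂ) (n : ℕ) :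
    (∑ j ∈ range (n + 1), z ^ j • (a (n - j))ᴴ)ᴴ =
      conj z ^ n • ∑ j ∈ range (n + 1), z ^ j • a j := by
  simp only [conjTranspose_sum, conjTranspose_smul, conjTranspose_conjTranspose, smul_sum,
    smul_smul]
  rw [← sum_range_reflect]
  refine sum_congr rfl fun j hj => ?_
  have hj : j ≤ n := Nat.lt_succ_iff.mp (mem_range.mp hj)
  rw [Nat.add_sub_cancel, Nat.sub_sub_self hj, star_pow, Complex.star_def,
    ← pow_sub_mul_pow (conj z) hj, mul_assoc, ← mul_pow, hz, one_pow, mul_one]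

theorem conj_exp_mul_I_mul_self (θ : ℝ) : conj (cexp (θ * I)) * cexp (θ * I) = 1 := by
  rw [← Complex.exp_conj, ← Complex.exp_add]
  simp

theorem exp_mul_I_pow_mul_conj_pow (θ : ℝ) (r s : ℕ) :
    cexp (θ * I) ^ r * conj (cexp (θ * I)) ^ s = cexp (((r : ℤ) - s : ℤ) * θ * I) := by
  rw [← Complex.exp_nat_mul, ← Complex.exp_conj, ← Complex.exp_nat_mul, ← Complex.exp_add]
  congr 1
  simp only [map_mul, Complex.conj_ofReal, Complex.conj_I]
  push_cast
  ring

section MatInt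

variable {p : ℕ}

def MatIntegrable (μ : Measure ℝ) (F : ℝ → Matrix (Fin p) (Fin p) ℂ) : Prop :=
  ∀ i j, Integrable (fun θ => F θ i j) μ

variable {μ : Measure ℝ}

theorem MatIntegrable.finset_sum {ι : Type*} (s : Finset ι)
    {F : ι → ℝ → Matrix (Fin p) (Fin p) ℂ}
    (hF : ∀ k ∈ s, MatIntegrable μ (F k)) : MatIntegrable μ (fun θ => ∑ k ∈ s, F k θ) := by
  intro i j
  simp only [Matrix.sum_apply]
  exact integrable_finsetSum s fun k hk => hF k hk i j

theorem MatIntegrable.const_mul {F : ℝ → Matrix (Fin p) (Fin p) ℂ} (hF : MatIntegrable μ F)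
    (C : Matrix (Fin p) (Fin p) ℂ) : MatIntegrable μ (fun θ => C * F θ) := fun i j => by
  simp only [mul_apply]
  exact integrable_finsetSum _ fun k _ => (hF k j).const_mul _

theorem MatIntegrable.mul_const {F : ℝ → Matrix (Fin p) (Fin p) ℂ} (hF : MatIntegrable μ F)
    (C : Matrix (Fin p) (Fin p) ℂ) : MatIntegrable μ (fun θ => F θ * C) := fun i j => by
  simp only [mul_apply]
  exact integrable_finsetSum _ fun k _ => (hF i k).mul_const _

theorem matInt_finset_sum {ι : Type*} (s : Finset ι) {F : ι → ℝ → Matrix (Fin p) (Fin p) ℂ}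
    (hF : ∀ k ∈ s, MatIntegrable μ (F k)) :
    matInt μ (fun θ => ∑ k ∈ s, F k θ) = ∑ k ∈ s, matInt μ (F k) := by
  ext i j
  simp only [matInt, of_apply, Matrix.sum_apply]
  exact integral_finsetSum s fun k hk => hF k hk i j

theorem matInt_const_mul {F : ℝ → Matrix (Fin p) (Fin p) ℂ} (hF : MatIntegrable μ F)
    (C : Matrix (Fin p) (Fin p) ℂ) : matInt μ (fun θ => C * F θ) = C * matInt μ F := by
  ext i j
  simp only [matInt, of_apply, mul_apply]
  rw [integral_finsetSum _ fun k _ => (hF k j).const_mul _]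
  simp only [integral_const_mul]

theorem matInt_mul_const {F : ℝ → Matrix (Fin p) (Fin p) ℂ} (hF : MatIntegrable μ F)
    (C : Matrix (Fin p) (Fin p) ℂ) : matInt μ (fun θ => F θ * C) = matInt μ F * C := by
  ext i j
  simp only [matInt, of_apply, mul_apply]
  rw [integral_finsetSum _ fun k _ => (hF i k).mul_const _]
  simp only [integral_mul_const]

variable {W : ℝ → Matrix (Fin p) (Fin p) ℂ}

theorem matIntegrable_mul_smul_mul {g : ℝ → ℂ}
    (hg : ∀ a b, Integrable (fun θ => g θ * W θ a b) μ)
    (A B : Matrix (Fin p) (Fin p) ℂ) : MatIntegrable μ (fun θ => A * (g θ • W θ) * B) :=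
  (MatIntegrable.const_mul (fun a b => by simpa using hg a b) A).mul_const B

theorem matIntegrable_sum_mul_mul_conjTranspose_sum
    (hW : ∀ k : ℤ, ∀ i j, Integrable (fun θ : ℝ => cexp (k * θ * I) * W θ i j) μ)
    (s t : Finset ℕ) (A B : ℕ → Matrix (Fin p) (Fin p) ℂ) :
    MatIntegrable μ (fun θ => (∑ r ∈ s, cexp (θ * I) ^ r • A r) * W θ *
      (∑ k ∈ t, cexp (θ * I) ^ k • B k)ᴴ) := by
  have h : ∀ θ : ℝ,
      (∑ r ∈ s, cexp (θ * I) ^ r • A r) * W θ * (∑ k ∈ t, cexp (θ * I) ^ k • B k)ᴴ =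
        ∑ r ∈ s, ∑ k ∈ t,
          A r * ((cexp (θ * I) ^ r * conj (cexp (θ * I)) ^ k) • W θ) * (B k)ᴴ := by
    intro θ
    simp only [conjTranspose_sum, conjTranspose_smul, sum_mul, mul_sum, Matrix.smul_mul,
      Matrix.mul_smul, smul_smul, star_pow, Complex.star_def]
    rw [sum_comm]
    simp only [mul_comm]
  simp only [h, exp_mul_I_pow_mul_conj_pow]
  exact .finset_sum _ fun r _ => .finset_sum _ fun k _ =>
    matIntegrable_mul_smul_mul (hW _) _ _

theorem matIntegrable_conjTranspose_sum_mul_mul_sum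
    (hW : ∀ k : ℤ, ∀ i j, Integrable (fun θ : ℝ => cexp (k * θ * I) * W θ i j) μ)
    (s t : Finset ℕ) (A B : ℕ → Matrix (Fin p) (Fin p) ℂ) :
    MatIntegrable μ (fun θ => (∑ r ∈ s, cexp (θ * I) ^ r • A r)ᴴ * W θ *
      (∑ k ∈ t, cexp (θ * I) ^ k • B k)) := by
  have h : ∀ θ : ℝ,
      (∑ r ∈ s, cexp (θ * I) ^ r • A r)ᴴ * W θ * (∑ k ∈ t, cexp (θ * I) ^ k • B k) =
        ∑ r ∈ s, ∑ k ∈ t,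
          (A r)ᴴ * ((cexp (θ * I) ^ k * conj (cexp (θ * I)) ^ r) • W θ) * B k := by
    intro θ
    simp only [conjTranspose_sum, conjTranspose_smul, sum_mul, mul_sum, Matrix.smul_mul,
      Matrix.mul_smul, smul_smul, star_pow, Complex.star_def]
    rw [sum_comm]
  simp only [h, exp_mul_I_pow_mul_conj_pow]
  exact .finset_sum _ fun r _ => .finset_sum _ fun k _ =>
    matIntegrable_mul_smul_mul (hW _) _ _

end MatInt

section Orthonormal

variable {p : ℕ} {μ : Measure ℝ} {W : ℝ → Matrix (Fin p) (Fin p) ℂ}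
  {a : ℕ → ℕ → Matrix (Fin p) (Fin p) ℂ} {φ : ℕ → ℂ → Matrix (Fin p) (Fin p) ℂ}

theorem conjTranspose_mul_matInt_orthonormal_left
    (hW : ∀ k : ℤ, ∀ i j, Integrable (fun θ : ℝ => cexp (k * θ * I) * W θ i j) μ)
    (hφ : ∀ m z, φ m z = ∑ j ∈ range (m + 1), z ^ j • a m j) (hlead : ∀ m, IsUnit (a m m))
    (horth : ∀ k m, matInt μ (fun θ => φ k (cexp (θ * I)) * W θ * (φ m (cexp (θ * I)))ᴴ) =
      if k = m then 1 else 0)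
    (n : ℕ) (b : ℕ → Matrix (Fin p) (Fin p) ℂ) :
    (a n n)ᴴ * matInt μ (fun θ => φ n (cexp (θ * I)) * W θ *
      (∑ j ∈ range (n + 1), cexp (θ * I) ^ j • b j)ᴴ) = (b n)ᴴ := by
  obtain ⟨c, hcn, hc⟩ := exists_sum_pow_smul_eq_sum_mul_left (S := ℂ) a hlead n b
  have hint : ∀ m,
      MatIntegrable μ (fun θ => φ n (cexp (θ * I)) * W θ * (φ m (cexp (θ * I)))ᴴ) := fun m => by
    simpa only [hφ] using matIntegrable_sum_mul_mul_conjTranspose_sum hW _ _ (a n) (a m)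
  have hexpand : ∀ θ : ℝ,
      φ n (cexp (θ * I)) * W θ * (∑ j ∈ range (n + 1), cexp (θ * I) ^ j • b j)ᴴ =
        ∑ m ∈ range (n + 1), φ n (cexp (θ * I)) * W θ * (φ m (cexp (θ * I)))ᴴ * (c m)ᴴ := by
    intro θ
    simp only [hc, ← hφ, conjTranspose_sum, conjTranspose_mul, mul_sum, Matrix.mul_assoc]
  simp only [hexpand]
  rw [matInt_finset_sum _ fun m _ => (hint m).mul_const _]
  simp only [matInt_mul_const (hint _), horth, ite_mul, one_mul, zero_mul, sum_ite_eq,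
    mem_range, Nat.lt_succ_self, if_true]
  rw [← conjTranspose_mul, hcn]

theorem matInt_orthonormal_right_mul_conjTranspose
    (hW : ∀ k : ℤ, ∀ i j, Integrable (fun θ : ℝ => cexp (k * θ * I) * W θ i j) μ)
    (hφ : ∀ m z, φ m z = ∑ j ∈ range (m + 1), z ^ j • a m j) (hlead : ∀ m, IsUnit (a m m))
    (horth : ∀ k m, matInt μ (fun θ => (φ k (cexp (θ * I)))ᴴ * W θ * φ m (cexp (θ * I))) =
      if k = m then 1 else 0)
    (n : ℕ) (b : ℕ → Matrix (Fin p) (Fin p) ℂ) :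
    matInt μ (fun θ => (∑ j ∈ range (n + 1), cexp (θ * I) ^ j • b j)ᴴ * W θ *
      φ n (cexp (θ * I))) * (a n n)ᴴ = (b n)ᴴ := by
  obtain ⟨c, hcn, hc⟩ := exists_sum_pow_smul_eq_sum_mul_right (S := ℂ) a hlead n b
  have hint : ∀ m,
      MatIntegrable μ (fun θ => (φ m (cexp (θ * I)))ᴴ * W θ * φ n (cexp (θ * I))) := fun m => by
    simpa only [hφ] using matIntegrable_conjTranspose_sum_mul_mul_sum hW _ _ (a m) (a n)
  have hexpand : ∀ θ : ℝ,
      (∑ j ∈ range (n + 1), cexp (θ * I) ^ j • b j)ᴴ * W θ * φ n (cexp (θ * I)) =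
        ∑ m ∈ range (n + 1), (c m)ᴴ * ((φ m (cexp (θ * I)))ᴴ * W θ * φ n (cexp (θ * I))) := by
    intro θ
    simp only [hc, ← hφ, conjTranspose_sum, conjTranspose_mul, sum_mul, Matrix.mul_assoc]
  simp only [hexpand]
  rw [matInt_finset_sum _ fun m _ => (hint m).const_mul _]
  simp only [matInt_const_mul (hint _), horth, mul_ite, mul_one, mul_zero, sum_ite_eq',
    mem_range, Nat.lt_succ_self, if_true]
  rw [← conjTranspose_mul, hcn]

end Orthonormal

theorem reflection_coefficient_well_defined_general
    (p : ℕ)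
    (μ : Measure ℝ) (W : ℝ → Matrix (Fin p) (Fin p) ℂ)
    (hWint : ∀ k : ℤ, ∀ i j, Integrable (fun θ : ℝ => Complex.exp (k * (θ : ℂ) * Complex.I) * W θ i j) μ)
    (aL aR : ℕ → ℕ → Matrix (Fin p) (Fin p) ℂ)
    (φL φR : ℕ → ℂ → Matrix (Fin p) (Fin p) ℂ)
    (hφL : ∀ m z, φL m z = ∑ j ∈ range (m + 1), z ^ j • aL m j)
    (hφR : ∀ m z, φR m z = ∑ j ∈ range (m + 1), z ^ j • aR m j)
    (hLlead : ∀ m, IsUnit (aL m m)) (hRlead : ∀ m, IsUnit (aR m m))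
    (horthL : ∀ k m, matInt μ
      (fun θ => φL k (Complex.exp (θ * Complex.I)) * W θ *
        (φL m (Complex.exp (θ * Complex.I)))ᴴ) = if k = m then 1 else 0)
    (horthR : ∀ k m, matInt μ
      (fun θ => (φR k (Complex.exp (θ * Complex.I)))ᴴ * W θ *
        φR m (Complex.exp (θ * Complex.I))) = if k = m then 1 else 0)
    (n : ℕ) :
    (aL n 0)ᴴ * aL n n = aR n n * (aR n 0)ᴴ ∧
    ((aL n n)ᴴ)⁻¹ * aR n 0 = aL n 0 * ((aR n n)ᴴ)⁻¹ := by
  set H := matInt μ fun θ =>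
    conj (cexp (θ * I)) ^ n • (φL n (cexp (θ * I)) * W θ * φR n (cexp (θ * I)))
  have hL : (aL n n)ᴴ * H = aR n 0 := by
    simpa only [conjTranspose_sum_range_reverse (conj_exp_mul_I_mul_self _), ← hφR,
      Matrix.mul_smul, Nat.sub_self, conjTranspose_conjTranspose] using
      conjTranspose_mul_matInt_orthonormal_left hWint hφL hLlead horthL n
        fun j => (aR n (n - j))ᴴ
  have hR : H * (aR n n)ᴴ = aL n 0 := by
    simpa only [conjTranspose_sum_range_reverse (conj_exp_mul_I_mul_self _), ← hφL,
      Matrix.smul_mul, Nat.sub_self, conjTranspose_conjTranspose] using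
      matInt_orthonormal_right_mul_conjTranspose hWint hφR hRlead horthR n
        fun j => (aL n (n - j))ᴴ
  have hdetL : IsUnit (aL n n)ᴴ.det := by
    rw [det_conjTranspose]
    exact ((isUnit_iff_isUnit_det _).mp (hLlead n)).star
  have hdetR : IsUnit (aR n n)ᴴ.det := by
    rw [det_conjTranspose]
    exact ((isUnit_iff_isUnit_det _).mp (hRlead n)).star
  constructor
  · rw [← hL, ← hR, conjTranspose_mul, conjTranspose_mul, conjTranspose_conjTranspose,
      conjTranspose_conjTranspose, Matrix.mul_assoc]
  · rw [← hL, ← hR, nonsing_inv_mul_cancel_left _ _ hdetL,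
      mul_nonsing_inv_cancel_right _ _ hdetR]

/-- For left orthonormal matrix polynomials
`φ_n^L(z) = Σ_j z^j aL n j` and right orthonormal matrix polynomials
`φ_n^R(z) = Σ_j z^j aR n j` with respect to a positive matrix measure
`dρ = W dμ` on the unit circle, the leading and constant coefficients satisfy
`L_{n,0}* L_{n,n} = K_{n,n} K_{n,0}*`, so that the reflection coefficient
`H_n = (L_{n,n}*)⁻¹ K_{n,0} = L_{n,0} (K_{n,n}*)⁻¹` is well defined. -/
theorem reflection_coefficient_well_defined
    (p : ℕ) (hp : 0 < p)
    (μ : Measure ℝ) (W : ℝ → Matrix (Fin p) (Fin p) ℂ)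
    (hW : ∀ θ, (W θ).PosSemidef)
    (hWint : ∀ k : ℤ, ∀ i j, Integrable (fun θ : ℝ => Complex.exp (k * (θ : ℂ) * Complex.I) * W θ i j) μ)
    (aL aR : ℕ → ℕ → Matrix (Fin p) (Fin p) ℂ)
    (φL φR : ℕ → ℂ → Matrix (Fin p) (Fin p) ℂ)
    (hφL : ∀ m z, φL m z = ∑ j ∈ range (m + 1), z ^ j • aL m j)
    (hφR : ∀ m z, φR m z = ∑ j ∈ range (m + 1), z ^ j • aR m j)
    (hLlead : ∀ m, IsUnit (aL m m)) (hRlead : ∀ m, IsUnit (aR m m))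
    (horthL : ∀ k m, matInt μ
      (fun θ => φL k (Complex.exp (θ * Complex.I)) * W θ *
        (φL m (Complex.exp (θ * Complex.I)))ᴴ) = if k = m then 1 else 0)
    (horthR : ∀ k m, matInt μ
      (fun θ => (φR k (Complex.exp (θ * Complex.I)))ᴴ * W θ *
        φR m (Complex.exp (θ * Complex.I))) = if k = m then 1 else 0)
    (n : ℕ) :
    (aL n 0)ᴴ * aL n n = aR n n * (aR n 0)ᴴ ∧
    ((aL n n)ᴴ)⁻¹ * aR n 0 = aL n 0 * ((aR n n)ᴴ)⁻¹ :=
  reflection_coefficient_well_defined_general p μ W hWint aL aR φL φR hφL hφR hLlead hRlead horthL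
    horthR n
end

section
/- The matrix Christoffel–Darboux formula holds: (1 - ξ·conj(z)) Σ_{k=0}^n [φ_k^L(z)]* φ_k^L(ξ) = [φ̃_n^R(z)]* φ̃_n^R(ξ) - ξ·conj(z) [φ_n^L(z)]* φ_n^L(ξ) for all complex z, ξ. -/
open MeasureTheory Matrix Filter Topology Complex Finset
open scoped ComplexOrder

namespace CDaux
variable {p : ℕ}

noncomputable def Nr (w : Fin p → ℂ) : ℝ := ‖(WithLp.equiv 2 (Fin p → ℂ)).symm w‖

lemma dot_self (w : Fin p → ℂ) : star w ⬝ᵥ w = ((Nr w : ℂ))^2 := by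
  have h : Nr w = Real.sqrt (∑ i, ‖w i‖ ^ 2) := by
    rw [Nr, EuclideanSpace.norm_eq]
    congr 1
  have hnn : (0:ℝ) ≤ ∑ i, ‖w i‖ ^ 2 := Finset.sum_nonneg fun i _ => sq_nonneg _
  rw [h, dotProduct]
  have : ((Real.sqrt (∑ i, ‖w i‖ ^ 2) : ℂ))^2 = ((∑ i, ‖w i‖ ^ 2 : ℝ) : ℂ) := by
    rw [← Complex.ofReal_pow, Real.sq_sqrt hnn]
  rw [this]
  push_cast
  refine Finset.sum_congr rfl fun i _ => ?_
  simp [Complex.mul_conj', Complex.normSq_eq_norm_sq, mul_comm,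
    Complex.mul_conj]

lemma mulVec_norm_le (M : Matrix (Fin p) (Fin p) ℂ) (v : Fin p → ℂ) :
    Nr (M *ᵥ v) ≤ sNorm M * Nr v := by
  have h2 : (LinearMap.toContinuousLinearMap (Matrix.toEuclideanLin M))
      ((WithLp.equiv 2 (Fin p → ℂ)).symm v) = (WithLp.equiv 2 (Fin p → ℂ)).symm (M *ᵥ v) := by
    simp [Matrix.toEuclideanLin_apply_piLp_toLp]
  rw [Nr, Nr, sNorm, ← h2]
  exact ContinuousLinearMap.le_opNorm _ _

end CDaux

namespace CDaux2
open CDaux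
variable {p : ℕ}

lemma nr_eq_of_dot (a b : Fin p → ℂ) (h : star a ⬝ᵥ a = star b ⬝ᵥ b) : Nr a = Nr b := by
  rw [dot_self, dot_self] at h
  have h2 : (Nr a)^2 = (Nr b)^2 := by exact_mod_cast h
  exact (sq_eq_sq₀ (norm_nonneg _) (norm_nonneg _)).1 h2

lemma nr_ne_zero (v : Fin p → ℂ) (hv : v ≠ 0) : 0 < Nr v := by
  rw [Nr]
  have : ((WithLp.equiv 2 (Fin p → ℂ)).symm v) ≠ 0 := by
    intro h
    exact hv ((WithLp.equiv 2 (Fin p → ℂ)).symm.injective (by simpa using h))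
  exact norm_pos_iff.mpr this

lemma det_unit_left (M : Matrix (Fin p) (Fin p) ℂ) (h : sNorm M < 1) :
    IsUnit (1 - Mᴴ * M).det := by
  rw [isUnit_iff_ne_zero]
  intro hdet
  obtain ⟨v, hv, hveq⟩ := (Matrix.exists_mulVec_eq_zero_iff).2 hdet
  have hfix : v = Mᴴ *ᵥ (M *ᵥ v) := by
    have := hveq
    rw [Matrix.sub_mulVec, Matrix.one_mulVec, sub_eq_zero, ← Matrix.mulVec_mulVec] at this
    exact this
  have hdot : star v ⬝ᵥ v = star (M *ᵥ v) ⬝ᵥ (M *ᵥ v) := by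
    calc star v ⬝ᵥ v = star v ⬝ᵥ (Mᴴ *ᵥ (M *ᵥ v)) := by rw [← hfix]
      _ = (star v ᵥ* Mᴴ) ⬝ᵥ (M *ᵥ v) := Matrix.dotProduct_mulVec _ _ _
      _ = star (M *ᵥ v) ⬝ᵥ (M *ᵥ v) := by rw [← Matrix.star_mulVec]
  have heq : Nr v = Nr (M *ᵥ v) := nr_eq_of_dot _ _ hdot
  have hlt : Nr (M *ᵥ v) ≤ sNorm M * Nr v := mulVec_norm_le M v
  have hpos := nr_ne_zero v hv
  nlinarith [hpos, heq, hlt, h]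

lemma det_unit_right (M : Matrix (Fin p) (Fin p) ℂ) (h : sNorm M < 1) :
    IsUnit (1 - M * Mᴴ).det := by
  rw [isUnit_iff_ne_zero]
  intro hdet
  obtain ⟨v, hv, hveq⟩ := (Matrix.exists_mulVec_eq_zero_iff).2 hdet
  have hfix : v = M *ᵥ (Mᴴ *ᵥ v) := by
    rw [Matrix.sub_mulVec, Matrix.one_mulVec, sub_eq_zero, ← Matrix.mulVec_mulVec] at hveq
    exact hveq
  set y := Mᴴ *ᵥ v with hy
  have hdot : star v ⬝ᵥ v = star y ⬝ᵥ y := by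
    calc star v ⬝ᵥ v = star v ⬝ᵥ (M *ᵥ y) := by rw [← hfix]
      _ = (star v ᵥ* M) ⬝ᵥ y := Matrix.dotProduct_mulVec _ _ _
      _ = star y ⬝ᵥ y := by
          rw [hy, Matrix.star_mulVec, Matrix.conjTranspose_conjTranspose]
  have heq : Nr v = Nr y := nr_eq_of_dot _ _ hdot
  have hle : Nr (M *ᵥ y) ≤ sNorm M * Nr y := mulVec_norm_le M y
  rw [← hfix] at hle
  have hpos := nr_ne_zero v hv
  nlinarith [hpos, heq, hle, h]

end CDaux2


lemma cd_key {p : ℕ} (H SL SR a b c d fz fx gz gx : Matrix (Fin p) (Fin p) ℂ) (z ξ : ℂ)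
    (hSL : SLᴴ = SL) (hSR : SRᴴ = SR)
    (hSL2 : SL * SL = 1 - H * Hᴴ) (hSR2 : SR * SR = 1 - Hᴴ * H)
    (hdP : IsUnit (1 - H * Hᴴ).det) (hdQ : IsUnit (1 - Hᴴ * H).det)
    (huz : SL * fz = z • a + H * b) (hux : SL * fx = ξ • c + H * d)
    (hvz : SR * gz = b + z • (Hᴴ * a)) (hvx : SR * gx = d + ξ • (Hᴴ * c)) :
    gzᴴ * gx - fzᴴ * fx = bᴴ * d - (ξ * star z) • (aᴴ * c) := by
  set P := (1 - H * Hᴴ)⁻¹ with hPdef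
  set Q := (1 - Hᴴ * H)⁻¹ with hQdef
  have hP1 : (1 - H * Hᴴ) * P = 1 := Matrix.mul_nonsing_inv _ hdP
  have hP2 : P * (1 - H * Hᴴ) = 1 := Matrix.nonsing_inv_mul _ hdP
  have hQ1 : (1 - Hᴴ * H) * Q = 1 := Matrix.mul_nonsing_inv _ hdQ
  have hQ2 : Q * (1 - Hᴴ * H) = 1 := Matrix.nonsing_inv_mul _ hdQ
  have hdSL : IsUnit SL.det := by
    have h : IsUnit (SL.det * SL.det) := by rw [← Matrix.det_mul, hSL2]; exact hdP
    exact isUnit_of_mul_isUnit_left h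
  have hdSR : IsUnit SR.det := by
    have h : IsUnit (SR.det * SR.det) := by rw [← Matrix.det_mul, hSR2]; exact hdQ
    exact isUnit_of_mul_isUnit_left h
  have hSLP : SL * (P * SL) = 1 := by
    have hP : P = SL⁻¹ * SL⁻¹ := by rw [hPdef, ← hSL2, Matrix.mul_inv_rev]
    calc SL * (P * SL) = SL * (SL⁻¹ * (SL⁻¹ * SL)) := by rw [hP, mul_assoc]
      _ = SL * SL⁻¹ := by rw [Matrix.nonsing_inv_mul _ hdSL, mul_one]
      _ = 1 := Matrix.mul_nonsing_inv _ hdSL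
  have hSRQ : SR * (Q * SR) = 1 := by
    have hQ : Q = SR⁻¹ * SR⁻¹ := by rw [hQdef, ← hSR2, Matrix.mul_inv_rev]
    calc SR * (Q * SR) = SR * (SR⁻¹ * (SR⁻¹ * SR)) := by rw [hQ, mul_assoc]
      _ = SR * SR⁻¹ := by rw [Matrix.nonsing_inv_mul _ hdSR, mul_one]
      _ = 1 := Matrix.mul_nonsing_inv _ hdSR
  have hHQ : H * Q = P * H := by
    have h1 : (1 - H * Hᴴ) * H = H * (1 - Hᴴ * H) := by noncomm_ring
    calc H * Q = (P * (1 - H * Hᴴ)) * (H * Q) := by rw [hP2, one_mul]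
      _ = P * (((1 - H * Hᴴ) * H) * Q) := by simp only [mul_assoc]
      _ = P * (H * ((1 - Hᴴ * H) * Q)) := by rw [h1]; simp only [mul_assoc]
      _ = P * H := by rw [hQ1, mul_one]
  have hHP : Hᴴ * P = Q * Hᴴ := by
    have h1 : (1 - Hᴴ * H) * Hᴴ = Hᴴ * (1 - H * Hᴴ) := by noncomm_ring
    calc Hᴴ * P = (Q * (1 - Hᴴ * H)) * (Hᴴ * P) := by rw [hQ2, one_mul]
      _ = Q * (((1 - Hᴴ * H) * Hᴴ) * P) := by simp only [mul_assoc]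
      _ = Q * (Hᴴ * ((1 - H * Hᴴ) * P)) := by rw [h1]; simp only [mul_assoc]
      _ = Q * Hᴴ := by rw [hP1, mul_one]
  have e1 : fzᴴ * fx = (z • a + H * b)ᴴ * (P * (ξ • c + H * d)) := by
    rw [← huz, ← hux, Matrix.conjTranspose_mul, hSL]
    conv_lhs => rw [← one_mul fx, ← hSLP]
    simp only [mul_assoc]
  have e2 : gzᴴ * gx = (b + z • (Hᴴ * a))ᴴ * (Q * (d + ξ • (Hᴴ * c))) := by
    rw [← hvz, ← hvx, Matrix.conjTranspose_mul, hSR]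
    conv_lhs => rw [← one_mul gx, ← hSRQ]
    simp only [mul_assoc]
  have hPx : P * (ξ • c + H * d) = ξ • (P * c) + H * (Q * d) := by
    rw [mul_add, Matrix.mul_smul, ← mul_assoc, ← hHQ, mul_assoc]
  have hQx : Q * (d + ξ • (Hᴴ * c)) = Q * d + ξ • (Hᴴ * (P * c)) := by
    rw [mul_add, Matrix.mul_smul, ← mul_assoc, ← hHP, mul_assoc]
  rw [e1, e2, hPx, hQx]
  simp only [Matrix.conjTranspose_add, Matrix.conjTranspose_smul, Matrix.conjTranspose_mul,
    Matrix.conjTranspose_conjTranspose, Matrix.add_mul, Matrix.mul_add,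
    smul_mul_assoc, mul_smul_comm, smul_smul, mul_assoc]
  -- now collect
  have c1 : bᴴ * (Q * d) - bᴴ * (Hᴴ * (H * (Q * d))) = bᴴ * d := by
    rw [← mul_sub]
    congr 1
    calc Q * d - Hᴴ * (H * (Q * d)) = ((1 - Hᴴ * H) * Q) * d := by noncomm_ring
      _ = d := by rw [hQ1, one_mul]
  have c2 : aᴴ * (H * (Hᴴ * (P * c))) - aᴴ * (P * c) = -(aᴴ * c) := by
    rw [← mul_sub]
    have : H * (Hᴴ * (P * c)) - P * c = -c := by
      calc H * (Hᴴ * (P * c)) - P * c = -(((1 - H * Hᴴ) * P) * c) := by noncomm_ring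
        _ = -c := by rw [hP1, one_mul]
    rw [this, mul_neg]
  have goal2 : (bᴴ * (Q * d) - bᴴ * (Hᴴ * (H * (Q * d)))) +
      (star z * ξ) • (aᴴ * (H * (Hᴴ * (P * c))) - aᴴ * (P * c)) =
      bᴴ * d - (ξ * star z) • (aᴴ * c) := by
    rw [c1, c2, smul_neg, mul_comm (star z) ξ, sub_eq_add_neg]
  rw [← goal2]
  rw [smul_sub]
  module


lemma tilde_rec {p : ℕ} (aL aR : ℕ → ℕ → Matrix (Fin p) (Fin p) ℂ)
    (φL φR φLt φRt : ℕ → ℂ → Matrix (Fin p) (Fin p) ℂ)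
    (hφL : ∀ m z, φL m z = ∑ j ∈ range (m + 1), z ^ j • aL m j)
    (hφR : ∀ m z, φR m z = ∑ j ∈ range (m + 1), z ^ j • aR m j)
    (hφLt : ∀ m z, φLt m z = ∑ j ∈ range (m + 1), z ^ (m - j) • (aL m j)ᴴ)
    (hφRt : ∀ m z, φRt m z = ∑ j ∈ range (m + 1), z ^ (m - j) • (aR m j)ᴴ)
    (H SR : ℕ → Matrix (Fin p) (Fin p) ℂ)
    (hSRherm : ∀ m, (SR m)ᴴ = SR m)
    (hrecR : ∀ m z, φR (m + 1) z * SR (m + 1) = z • φR m z + φLt m z * H (m + 1))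
    (m : ℕ) (z : ℂ) :
    SR (m + 1) * φRt (m + 1) z = φRt m z + z • ((H (m + 1))ᴴ * φL m z) := by
  have key : ∀ z : ℂ, z ≠ 0 →
      SR (m + 1) * φRt (m + 1) z = φRt m z + z • ((H (m + 1))ᴴ * φL m z) := by
    intro z hz
    set w : ℂ := (starRingEnd ℂ) z⁻¹ with hw
    have hsw : star w = z⁻¹ := by
      rw [hw]; exact Complex.conj_conj _
    have claim1 : ∀ k, z ^ k • (φR k w)ᴴ = φRt k z := by
      intro k
      rw [hφR, hφRt, Matrix.conjTranspose_sum, Finset.smul_sum]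
      refine Finset.sum_congr rfl fun j hj => ?_
      have hjk : j ≤ k := Nat.lt_succ_iff.1 (Finset.mem_range.1 hj)
      rw [Matrix.conjTranspose_smul, star_pow, hsw, smul_smul,
        inv_pow, ← div_eq_mul_inv]
      have hp : z ^ k / z ^ j = z ^ (k - j) := by
        rw [div_eq_iff (pow_ne_zero _ hz), ← pow_add]
        congr 1
        omega
      rw [hp]
    have claim2 : z ^ m • (φLt m w)ᴴ = φL m z := by
      rw [hφLt, hφL, Matrix.conjTranspose_sum, Finset.smul_sum]
      refine Finset.sum_congr rfl fun j hj => ?_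
      have hjm : j ≤ m := Nat.lt_succ_iff.1 (Finset.mem_range.1 hj)
      rw [Matrix.conjTranspose_smul, Matrix.conjTranspose_conjTranspose,
        star_pow, hsw, smul_smul, inv_pow, ← div_eq_mul_inv]
      have hp : z ^ m / z ^ (m - j) = z ^ j := by
        rw [div_eq_iff (pow_ne_zero _ hz), ← pow_add]
        congr 1
        omega
      rw [hp]
    have h := congrArg Matrix.conjTranspose (hrecR m w)
    rw [Matrix.conjTranspose_mul, Matrix.conjTranspose_add, Matrix.conjTranspose_smul,
      Matrix.conjTranspose_mul, hSRherm, hsw] at h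
    have h2 := congrArg (fun M => z ^ (m + 1) • M) h
    simp only [smul_add, smul_smul] at h2
    rw [← mul_smul_comm, claim1 (m + 1)] at h2
    calc SR (m + 1) * φRt (m + 1) z
        = (z ^ (m + 1) * z⁻¹) • (φR m w)ᴴ
          + z ^ (m + 1) • ((H (m + 1))ᴴ * (φLt m w)ᴴ) := h2
      _ = φRt m z + z • ((H (m + 1))ᴴ * φL m z) := by
          rw [pow_succ, mul_assoc, mul_inv_cancel₀ hz, mul_one, claim1 m]
          congr 1
          rw [mul_comm (z ^ m) z, mul_smul, ← mul_smul_comm, claim2]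
  rcases eq_or_ne z 0 with rfl | hz
  · -- continuity argument
    have hcl : Continuous fun z : ℂ => SR (m + 1) * φRt (m + 1) z := by
      have hE : (fun z : ℂ => SR (m + 1) * φRt (m + 1) z)
          = fun z => SR (m + 1) * ∑ j ∈ range (m + 2), z ^ (m + 1 - j) • (aR (m + 1) j)ᴴ := by
        funext z; rw [hφRt]
      rw [hE]
      exact continuous_const.matrix_mul
        (continuous_finset_sum _ fun j _ => (continuous_pow _).smul continuous_const)
    have hcr : Continuous fun z : ℂ => φRt m z + z • ((H (m + 1))ᴴ * φL m z) := by
      have hE : (fun z : ℂ => φRt m z + z • ((H (m + 1))ᴴ * φL m z))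
          = fun z => (∑ j ∈ range (m + 1), z ^ (m - j) • (aR m j)ᴴ)
            + z • ((H (m + 1))ᴴ * ∑ j ∈ range (m + 1), z ^ j • aL m j) := by
        funext z; rw [hφRt, hφL]
      rw [hE]
      exact (continuous_finset_sum _ fun j _ => (continuous_pow _).smul continuous_const).add
        (continuous_id.smul (continuous_const.matrix_mul
          (continuous_finset_sum _ fun j _ => (continuous_pow _).smul continuous_const)))
    have := Continuous.ext_on (dense_compl_singleton (0 : ℂ)) hcl hcr
      (fun z hz => key z (Set.mem_compl_singleton_iff.1 hz))
    exact congrFun this 0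
  · exact key z hz

/-- The matrix Christoffel–Darboux formula.  Here `φ_n^L, φ_n^R`
are the left/right orthonormal matrix polynomials, given by coefficients
`aL, aR`, `φ̃` denotes the reversed matrix polynomial, and the Szegő recurrences
hold with reflection coefficients `H n` of spectral norm `< 1`, where `SL n` and
`SR n` are the positive square roots `(I - H_n H_n*)^{1/2}` and `(I - H_n* H_n)^{1/2}`. -/
theorem matrix_christoffel_darboux
    (p : ℕ)
    (aL aR : ℕ → ℕ → Matrix (Fin p) (Fin p) ℂ)
    (φL φR φLt φRt : ℕ → ℂ → Matrix (Fin p) (Fin p) ℂ)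
    (hφL : ∀ m z, φL m z = ∑ j ∈ range (m + 1), z ^ j • aL m j)
    (hφR : ∀ m z, φR m z = ∑ j ∈ range (m + 1), z ^ j • aR m j)
    (hφLt : ∀ m z, φLt m z = ∑ j ∈ range (m + 1), z ^ (m - j) • (aL m j)ᴴ)
    (hφRt : ∀ m z, φRt m z = ∑ j ∈ range (m + 1), z ^ (m - j) • (aR m j)ᴴ)
    (H SL SR : ℕ → Matrix (Fin p) (Fin p) ℂ)
    (hHnorm : ∀ m, 1 ≤ m → sNorm (H m) < 1)
    (hSLherm : ∀ m, (SL m)ᴴ = SL m) (hSRherm : ∀ m, (SR m)ᴴ = SR m)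
    (hSLsq : ∀ m, SL m ^ 2 = 1 - H m * (H m)ᴴ)
    (hSRsq : ∀ m, SR m ^ 2 = 1 - (H m)ᴴ * H m)
    (hrecL : ∀ m z, SL (m + 1) * φL (m + 1) z = z • φL m z + H (m + 1) * φRt m z)
    (hrecR : ∀ m z, φR (m + 1) z * SR (m + 1) = z • φR m z + φLt m z * H (m + 1))
    (hinit : (aL 0 0)ᴴ * aL 0 0 = aR 0 0 * (aR 0 0)ᴴ)
    (n : ℕ) :
    ∀ z ξ : ℂ,
      (1 - ξ * (starRingEnd ℂ) z) • ∑ k ∈ range (n + 1), (φL k z)ᴴ * φL k ξ =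
        (φRt n z)ᴴ * φRt n ξ - (ξ * (starRingEnd ℂ) z) • ((φL n z)ᴴ * φL n ξ) := by
  intro z ξ
  induction n with
  | zero =>
    rw [Finset.sum_range_one]
    have h1 : ∀ u : ℂ, φL 0 u = aL 0 0 := by
      intro u; rw [hφL]; simp
    have h2 : ∀ u : ℂ, φRt 0 u = (aR 0 0)ᴴ := by
      intro u; rw [hφRt]; simp
    rw [h1, h1, h2, h2, Matrix.conjTranspose_conjTranspose, ← hinit, sub_smul, one_smul]
  | succ n ih =>
    have hkey := cd_key (H (n + 1)) (SL (n + 1)) (SR (n + 1)) (φL n z) (φRt n z)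
      (φL n ξ) (φRt n ξ) (φL (n + 1) z) (φL (n + 1) ξ) (φRt (n + 1) z) (φRt (n + 1) ξ) z ξ
      (hSLherm _) (hSRherm _)
      (by rw [← pow_two]; exact hSLsq _) (by rw [← pow_two]; exact hSRsq _)
      (CDaux2.det_unit_right _ (hHnorm (n + 1) (Nat.le_add_left 1 n)))
      (CDaux2.det_unit_left _ (hHnorm (n + 1) (Nat.le_add_left 1 n)))
      (hrecL n z) (hrecL n ξ)
      (tilde_rec aL aR φL φR φLt φRt hφL hφR hφLt hφRt H SR hSRherm hrecR n z)
      (tilde_rec aL aR φL φR φLt φRt hφL hφR hφLt hφRt H SR hSRherm hrecR n ξ)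
    have hstar : star z = (starRingEnd ℂ) z := rfl
    rw [hstar] at hkey
    rw [Finset.sum_range_succ, smul_add, ih]
    have hA : (φRt (n + 1) z)ᴴ * φRt (n + 1) ξ =
        ((φRt n z)ᴴ * φRt n ξ - (ξ * (starRingEnd ℂ) z) • ((φL n z)ᴴ * φL n ξ))
          + (φL (n + 1) z)ᴴ * φL (n + 1) ξ := by
      rw [← hkey]; abel
    rw [hA, sub_smul, one_smul]
    abel
end

section
/- For z on the unit circle, the left and right orthonormal matrix polynomials satisfy φ_n^R(z) φ̃_n^R(z) = φ̃_n^L(z) φ_n^L(z). -/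
open MeasureTheory Matrix Filter Topology Complex Finset
open scoped ComplexOrder

set_option maxHeartbeats 1000000 in
set_option synthInstance.maxHeartbeats 400000 in
lemma aux_unit {p : ℕ} (h : Matrix (Fin p) (Fin p) ℂ) (hn : sNorm h < 1) :
    IsUnit (1 - hᴴ * h) ∧ IsUnit (1 - h * hᴴ) := by
  set e := toEuclideanCLM (𝕜 := ℂ) (n := Fin p) with he
  have hne : ‖e h‖ < 1 := hn
  have key : ∀ a b : Matrix (Fin p) (Fin p) ℂ, ‖e (a * b)‖ < 1 → IsUnit (1 - a * b) := by
    intro a b hab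
    have h1 : IsUnit (e (1 - a * b)) := by
      have h2 : e (1 - a * b) = 1 - e (a * b) := by
        rw [map_sub, _root_.map_one]
      rw [h2]
      exact (Units.oneSub _ hab).isUnit
    have h3 := h1.map e.symm
    simpa using h3
  have hsa : e hᴴ = star (e h) := map_star e h
  have hb : ‖e (hᴴ * h)‖ < 1 := by
    rw [_root_.map_mul, hsa]
    calc ‖star (e h) * e h‖ ≤ ‖star (e h)‖ * ‖e h‖ := norm_mul_le _ _
      _ = ‖e h‖ * ‖e h‖ := by
          rw [ContinuousLinearMap.star_eq_adjoint, LinearIsometryEquiv.norm_map]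
      _ < 1 * 1 := mul_lt_mul' (le_of_lt hne) hne (norm_nonneg _) one_pos
      _ = 1 := by ring
  have hb' : ‖e (h * hᴴ)‖ < 1 := by
    rw [_root_.map_mul, hsa]
    calc ‖e h * star (e h)‖ ≤ ‖e h‖ * ‖star (e h)‖ := norm_mul_le _ _
      _ = ‖e h‖ * ‖e h‖ := by
          rw [ContinuousLinearMap.star_eq_adjoint, LinearIsometryEquiv.norm_map]
      _ < 1 * 1 := mul_lt_mul' (le_of_lt hne) hne (norm_nonneg _) one_pos
      _ = 1 := by ring
  exact ⟨key _ _ hb, key _ _ hb'⟩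

/-- For `z` on the unit circle, the left and right orthonormal
matrix polynomials satisfy `φ_n^R(z) φ̃_n^R(z) = φ̃_n^L(z) φ_n^L(z)`
(a consequence of the matrix Christoffel–Darboux formula at `ξ = z`, `|z| = 1`). -/
theorem matrix_opuc_circle_identity
    (p : ℕ)
    (aL aR : ℕ → ℕ → Matrix (Fin p) (Fin p) ℂ)
    (φL φR φLt φRt : ℕ → ℂ → Matrix (Fin p) (Fin p) ℂ)
    (hφL : ∀ m z, φL m z = ∑ j ∈ range (m + 1), z ^ j • aL m j)
    (hφR : ∀ m z, φR m z = ∑ j ∈ range (m + 1), z ^ j • aR m j)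
    (hφLt : ∀ m z, φLt m z = ∑ j ∈ range (m + 1), z ^ (m - j) • (aL m j)ᴴ)
    (hφRt : ∀ m z, φRt m z = ∑ j ∈ range (m + 1), z ^ (m - j) • (aR m j)ᴴ)
    (H SL SR : ℕ → Matrix (Fin p) (Fin p) ℂ)
    (hHnorm : ∀ m, 1 ≤ m → sNorm (H m) < 1)
    (hSLherm : ∀ m, (SL m)ᴴ = SL m) (hSRherm : ∀ m, (SR m)ᴴ = SR m)
    (hSLsq : ∀ m, SL m ^ 2 = 1 - H m * (H m)ᴴ)
    (hSRsq : ∀ m, SR m ^ 2 = 1 - (H m)ᴴ * H m)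
    (hrecL : ∀ m z, SL (m + 1) * φL (m + 1) z = z • φL m z + H (m + 1) * φRt m z)
    (hrecR : ∀ m z, φR (m + 1) z * SR (m + 1) = z • φR m z + φLt m z * H (m + 1))
    (hinit : (aL 0 0)ᴴ * aL 0 0 = aR 0 0 * (aR 0 0)ᴴ)
    (n : ℕ) :
    ∀ z : ℂ, ‖z‖ = 1 →
      φR n z * φRt n z = φLt n z * φL n z := by
  intro z hz
  have hz0 : z ≠ 0 := by
    intro h; rw [h] at hz; simp at hz
  have hstarz : star z = z⁻¹ := by
    have hns : Complex.normSq z = 1 := by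
      rw [Complex.normSq_eq_norm_sq, hz]; norm_num
    have h1 : z * star z = 1 := by
      rw [Complex.star_def, Complex.mul_conj, hns]; norm_num
    exact (inv_eq_of_mul_eq_one_right h1).symm
  -- reversed polynomial representations
  have tildeR : ∀ m, φRt m z = z ^ m • (φR m z)ᴴ := by
    intro m
    rw [hφRt m z, hφR m z, conjTranspose_sum, Finset.smul_sum]
    refine Finset.sum_congr rfl fun j hj => ?_
    have hjm : j ≤ m := Nat.lt_succ_iff.mp (Finset.mem_range.mp hj)
    rw [conjTranspose_smul, smul_smul]
    congr 1
    rw [pow_sub₀ z hz0 hjm, star_pow, hstarz, inv_pow]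
  have tildeL : ∀ m, φLt m z = z ^ m • (φL m z)ᴴ := by
    intro m
    rw [hφLt m z, hφL m z, conjTranspose_sum, Finset.smul_sum]
    refine Finset.sum_congr rfl fun j hj => ?_
    have hjm : j ≤ m := Nat.lt_succ_iff.mp (Finset.mem_range.mp hj)
    rw [conjTranspose_smul, smul_smul]
    congr 1
    rw [pow_sub₀ z hz0 hjm, star_pow, hstarz, inv_pow]
  induction n with
  | zero =>
    have h1 : φR 0 z = aR 0 0 := by rw [hφR]; simp
    have h2 : φRt 0 z = (aR 0 0)ᴴ := by rw [hφRt]; simp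
    have h3 : φL 0 z = aL 0 0 := by rw [hφL]; simp
    have h4 : φLt 0 z = (aL 0 0)ᴴ := by rw [hφLt]; simp
    rw [h1, h2, h3, h4]
    exact hinit.symm
  | succ m ih =>
    -- abbreviations
    have hm1 : (1:ℕ) ≤ m + 1 := Nat.le_add_left 1 m
    obtain ⟨uR, uL⟩ := aux_unit (H (m+1)) (hHnorm (m+1) hm1)
    -- scalar identities
    have c1 : z ^ (m+1) * star z = z ^ m := by
      rw [hstarz, pow_succ, mul_assoc, mul_inv_cancel₀ hz0, mul_one]
    have c2 : z ^ (m+1) * star (z ^ m) = z := by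
      rw [star_pow, hstarz, inv_pow, pow_succ, mul_comm (z^m) z, mul_assoc,
        mul_inv_cancel₀ (pow_ne_zero m hz0), mul_one]
    -- invertibility of SR, SL
    have hdetR : IsUnit (SR (m+1)).det := by
      have h2 : IsUnit ((SR (m+1)).det ^ 2) := by
        rw [← Matrix.det_pow, hSRsq]
        exact (Matrix.isUnit_iff_isUnit_det _).mp uR
      rw [isUnit_iff_ne_zero] at h2 ⊢
      exact fun hc => h2 (by rw [hc]; ring)
    have hdetL : IsUnit (SL (m+1)).det := by
      have h2 : IsUnit ((SL (m+1)).det ^ 2) := by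
        rw [← Matrix.det_pow, hSLsq]
        exact (Matrix.isUnit_iff_isUnit_det _).mp uL
      rw [isUnit_iff_ne_zero] at h2 ⊢
      exact fun hc => h2 (by rw [hc]; ring)
    have hsR1 : SR (m+1) * (SR (m+1))⁻¹ = 1 := Matrix.mul_nonsing_inv _ hdetR
    have hsR2 : (SR (m+1))⁻¹ * SR (m+1) = 1 := Matrix.nonsing_inv_mul _ hdetR
    have hsL1 : SL (m+1) * (SL (m+1))⁻¹ = 1 := Matrix.mul_nonsing_inv _ hdetL
    have hsL2 : (SL (m+1))⁻¹ * SL (m+1) = 1 := Matrix.nonsing_inv_mul _ hdetL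
    set P : Matrix (Fin p) (Fin p) ℂ := (1 - (H (m+1))ᴴ * H (m+1))⁻¹ with hPdef
    set Q : Matrix (Fin p) (Fin p) ℂ := (1 - H (m+1) * (H (m+1))ᴴ)⁻¹ with hQdef
    have hP1 : (1 - (H (m+1))ᴴ * H (m+1)) * P = 1 :=
      Matrix.mul_nonsing_inv _ ((Matrix.isUnit_iff_isUnit_det _).mp uR)
    have hP2 : P * (1 - (H (m+1))ᴴ * H (m+1)) = 1 :=
      Matrix.nonsing_inv_mul _ ((Matrix.isUnit_iff_isUnit_det _).mp uR)
    have hQ1 : (1 - H (m+1) * (H (m+1))ᴴ) * Q = 1 :=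
      Matrix.mul_nonsing_inv _ ((Matrix.isUnit_iff_isUnit_det _).mp uL)
    have hQ2 : Q * (1 - H (m+1) * (H (m+1))ᴴ) = 1 :=
      Matrix.nonsing_inv_mul _ ((Matrix.isUnit_iff_isUnit_det _).mp uL)
    have hPP : (SR (m+1))⁻¹ * (SR (m+1))⁻¹ = P := by
      rw [hPdef, ← hSRsq, ← Matrix.mul_inv_rev, ← pow_two]
    have hQQ : (SL (m+1))⁻¹ * (SL (m+1))⁻¹ = Q := by
      rw [hQdef, ← hSLsq, ← Matrix.mul_inv_rev, ← pow_two]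
    -- recursions at z
    have E1 := hrecL m z
    have E2 := hrecR m z
    -- reversed recursions at z
    have E3 : φLt (m+1) z * SL (m+1) = φLt m z + z • (φR m z * (H (m+1))ᴴ) := by
      rw [tildeL (m+1), smul_mul_assoc, ← hSLherm (m+1), ← conjTranspose_mul, E1,
        tildeR m, conjTranspose_add, conjTranspose_smul, conjTranspose_mul,
        conjTranspose_smul, conjTranspose_conjTranspose, smul_add, smul_smul, c1,
        smul_mul_assoc, smul_smul, c2, ← tildeL m]
    have E4 : SR (m+1) * φRt (m+1) z = φRt m z + z • ((H (m+1))ᴴ * φL m z) := by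
      rw [tildeR (m+1), mul_smul_comm, ← hSRherm (m+1), ← conjTranspose_mul, E2,
        tildeL m, conjTranspose_add, conjTranspose_smul, conjTranspose_mul,
        conjTranspose_smul, conjTranspose_conjTranspose, smul_add, smul_smul, c1,
        mul_smul_comm, smul_smul, c2, ← tildeR m]
    -- solve for the degree-(m+1) polynomials
    have hR' : φR (m+1) z = (z • φR m z + φLt m z * H (m+1)) * (SR (m+1))⁻¹ := by
      calc φR (m+1) z = φR (m+1) z * (SR (m+1) * (SR (m+1))⁻¹) := by rw [hsR1, mul_one]
        _ = (φR (m+1) z * SR (m+1)) * (SR (m+1))⁻¹ := by rw [mul_assoc]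
        _ = _ := by rw [E2]
    have hRt' : φRt (m+1) z = (SR (m+1))⁻¹ * (φRt m z + z • ((H (m+1))ᴴ * φL m z)) := by
      calc φRt (m+1) z = ((SR (m+1))⁻¹ * SR (m+1)) * φRt (m+1) z := by rw [hsR2, one_mul]
        _ = (SR (m+1))⁻¹ * (SR (m+1) * φRt (m+1) z) := by rw [mul_assoc]
        _ = _ := by rw [E4]
    have hL' : φL (m+1) z = (SL (m+1))⁻¹ * (z • φL m z + H (m+1) * φRt m z) := by
      calc φL (m+1) z = ((SL (m+1))⁻¹ * SL (m+1)) * φL (m+1) z := by rw [hsL2, one_mul]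
        _ = (SL (m+1))⁻¹ * (SL (m+1) * φL (m+1) z) := by rw [mul_assoc]
        _ = _ := by rw [E1]
    have hLt' : φLt (m+1) z = (φLt m z + z • (φR m z * (H (m+1))ᴴ)) * (SL (m+1))⁻¹ := by
      calc φLt (m+1) z = φLt (m+1) z * (SL (m+1) * (SL (m+1))⁻¹) := by rw [hsL1, mul_one]
        _ = (φLt (m+1) z * SL (m+1)) * (SL (m+1))⁻¹ := by rw [mul_assoc]
        _ = _ := by rw [E3]
    -- intertwining relations
    have key1 : H (m+1) * (1 - (H (m+1))ᴴ * H (m+1)) =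
        (1 - H (m+1) * (H (m+1))ᴴ) * H (m+1) := by noncomm_ring
    have key2 : (1 - (H (m+1))ᴴ * H (m+1)) * (H (m+1))ᴴ =
        (H (m+1))ᴴ * (1 - H (m+1) * (H (m+1))ᴴ) := by noncomm_ring
    have hI1 : H (m+1) * P = Q * H (m+1) := by
      have h5 : (1 - H (m+1) * (H (m+1))ᴴ) * (H (m+1) * P) = H (m+1) := by
        rw [← mul_assoc, ← key1, mul_assoc, hP1, mul_one]
      calc H (m+1) * P = (Q * (1 - H (m+1) * (H (m+1))ᴴ)) * (H (m+1) * P) := by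
            rw [hQ2, one_mul]
        _ = Q * ((1 - H (m+1) * (H (m+1))ᴴ) * (H (m+1) * P)) := mul_assoc _ _ _
        _ = Q * H (m+1) := by rw [h5]
    have hI2 : P * (H (m+1))ᴴ = (H (m+1))ᴴ * Q := by
      have h5 : (P * (H (m+1))ᴴ) * (1 - H (m+1) * (H (m+1))ᴴ) = (H (m+1))ᴴ := by
        rw [mul_assoc, ← key2, ← mul_assoc, hP2, one_mul]
      calc P * (H (m+1))ᴴ = (P * (H (m+1))ᴴ) * ((1 - H (m+1) * (H (m+1))ᴴ) * Q) := by
            rw [hQ1, mul_one]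
        _ = ((P * (H (m+1))ᴴ) * (1 - H (m+1) * (H (m+1))ᴴ)) * Q := (mul_assoc _ _ _).symm
        _ = (H (m+1))ᴴ * Q := by rw [h5]
    have hQ3 : H (m+1) * ((H (m+1))ᴴ * Q) = Q - 1 := by
      calc H (m+1) * ((H (m+1))ᴴ * Q) = Q - (1 - H (m+1) * (H (m+1))ᴴ) * Q := by noncomm_ring
        _ = Q - 1 := by rw [hQ1]
    have hP3 : (H (m+1))ᴴ * (H (m+1) * P) = P - 1 := by
      calc (H (m+1))ᴴ * (H (m+1) * P) = P - (1 - (H (m+1))ᴴ * H (m+1)) * P := by noncomm_ring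
        _ = P - 1 := by rw [hP1]
    have b1 : ∀ X, P * ((H (m+1))ᴴ * X) = (H (m+1))ᴴ * (Q * X) := fun X => by
      rw [← mul_assoc, hI2, mul_assoc]
    have b2 : ∀ X, H (m+1) * (P * X) = Q * (H (m+1) * X) := fun X => by
      rw [← mul_assoc, hI1, mul_assoc]
    have b3 : ∀ X, H (m+1) * (P * ((H (m+1))ᴴ * X)) = Q * X - X := fun X => by
      rw [b1, ← mul_assoc, ← mul_assoc, mul_assoc (H (m+1)), hQ3, sub_mul, one_mul]
    have b4 : ∀ X, (H (m+1))ᴴ * (Q * (H (m+1) * X)) = P * X - X := fun X => by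
      rw [← b2, ← mul_assoc, ← mul_assoc, mul_assoc ((H (m+1))ᴴ), hP3, sub_mul, one_mul]
    -- the main computation
    rw [hR', hRt', hL', hLt']
    rw [mul_assoc, ← mul_assoc (SR (m+1))⁻¹, hPP, mul_assoc, ← mul_assoc (SL (m+1))⁻¹, hQQ]
    simp only [mul_add, add_mul, smul_add, smul_mul_assoc, mul_smul_comm, smul_smul, mul_assoc]
    rw [b3 (φL m z), b4 (φRt m z), b1 (φL m z), b2 (φRt m z)]
    rw [mul_sub, mul_sub, ih]
    module
end

section
/- For z on the unit circle, the matrix φ̃_{n}^R(z) [φ_{n}^L(z)]^{-1} is unitary, where the inverse exists because φ_n^L has no zeros on the unit circle. -/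
open MeasureTheory Matrix Filter Topology Complex Finset
open scoped ComplexOrder

/-- For `z` on the unit circle, the matrix
`φ̃_n^R(z) [φ_n^L(z)]⁻¹` is unitary (the inverse exists because `φ_n^L` has no
zeros on the unit circle).  The hypotheses record the identities
`φ_n^R(z) φ̃_n^R(z) = φ̃_n^L(z) φ_n^L(z)`, `φ̃_n^R(z) = z^n [φ_n^R(z)]*`,
`φ̃_n^L(z) = z^n [φ_n^L(z)]*` and `det φ_n^L(z) ≠ 0` on the unit circle. -/
theorem reversed_ratio_unitary_on_circle
    (p : ℕ) (n : ℕ)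
    (φL φR φLt φRt : ℕ → ℂ → Matrix (Fin p) (Fin p) ℂ)
    (htildeR : ∀ z : ℂ, ‖z‖ = 1 → φRt n z = z ^ n • (φR n z)ᴴ)
    (htildeL : ∀ z : ℂ, ‖z‖ = 1 → φLt n z = z ^ n • (φL n z)ᴴ)
    (hid : ∀ z : ℂ, ‖z‖ = 1 → φR n z * φRt n z = φLt n z * φL n z)
    (hunitL : ∀ z : ℂ, ‖z‖ = 1 → IsUnit (φL n z)) :
    ∀ z : ℂ, ‖z‖ = 1 →
      φRt n z * (φL n z)⁻¹ ∈ Matrix.unitaryGroup (Fin p) ℂ := by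
  intro z hz
  set A := φL n z with hA
  set R := φR n z with hR
  have hdet : IsUnit A.det := (Matrix.isUnit_iff_isUnit_det A).mp (hunitL z hz)
  have hzn : (z : ℂ) ^ n ≠ 0 := by
    intro h
    simp [pow_eq_zero_iff] at h
    rcases h with ⟨h1, -⟩
    simp [h1] at hz
  -- key identity R * Rᴴ = Aᴴ * A
  have hkey : R * Rᴴ = Aᴴ * A := by
    have h := hid z hz
    rw [htildeR z hz, htildeL z hz] at h
    rw [Matrix.mul_smul, Matrix.smul_mul] at h
    exact smul_right_injective _ hzn h
  have hconj : (starRingEnd ℂ) (z ^ n) * z ^ n = 1 := by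
    rw [mul_comm, Complex.mul_conj']
    have : ‖z ^ n‖ = 1 := by rw [norm_pow, hz, one_pow]
    rw [this]
    norm_num
  rw [Matrix.mem_unitaryGroup_iff']
  rw [htildeR z hz]
  rw [Matrix.star_eq_conjTranspose]
  rw [Matrix.conjTranspose_mul, Matrix.conjTranspose_smul,
    Matrix.conjTranspose_conjTranspose, Matrix.conjTranspose_nonsing_inv]
  calc (Aᴴ)⁻¹ * ((starRingEnd ℂ) (z ^ n) • R) * (z ^ n • Rᴴ * A⁻¹)
      = ((starRingEnd ℂ) (z ^ n) * z ^ n) • ((Aᴴ)⁻¹ * (R * Rᴴ) * A⁻¹) := by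
        simp only [Matrix.mul_smul, Matrix.smul_mul, smul_smul, Matrix.mul_assoc,
          mul_comm]
    _ = (Aᴴ)⁻¹ * (Aᴴ * A) * A⁻¹ := by rw [hconj, one_smul, hkey]
    _ = 1 := by
        rw [← Matrix.mul_assoc, Matrix.nonsing_inv_mul _ (by simpa using hdet),
          Matrix.one_mul, Matrix.mul_nonsing_inv _ hdet]
end

section
/- The matrix reflection coefficient satisfies the bound ‖H_{n+1}‖₂ ≤ (1/2π) ∫₀^{2π} ‖ φ_n^L(z) [φ_{n+ℓ}^L(z)]^{-1} ([φ_{n+ℓ}^L(z)]*)^{-1} [φ_n^L(z)]* − I ‖₂ dθ for every ℓ ≥ 1. -/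
open MeasureTheory Matrix Filter Topology Complex Finset
open scoped ComplexOrder

section Aux

open scoped Matrix.Norms.L2Operator

lemma sNorm_eq_norm {p : ℕ} (M : Matrix (Fin p) (Fin p) ℂ) : sNorm M = ‖M‖ := rfl

/-- The entry-evaluation continuous linear functional on matrices. -/
noncomputable def entryCLM {p : ℕ} (i j : Fin p) : Matrix (Fin p) (Fin p) ℂ →L[ℂ] ℂ :=
  LinearMap.toContinuousLinearMap
    { toFun := fun M => M i j, map_add' := fun _ _ => rfl, map_smul' := fun _ _ => rfl }

lemma matIntI_eq_integral {p : ℕ} {g : ℝ → Matrix (Fin p) (Fin p) ℂ}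
    (hg : IntervalIntegrable g MeasureTheory.volume 0 (2 * Real.pi)) :
    matIntI g = ∫ θ in (0:ℝ)..(2 * Real.pi), g θ := by
  ext i j
  have h := (entryCLM i j).intervalIntegral_comp_comm hg
  have h2 : (∫ θ in (0:ℝ)..(2 * Real.pi), g θ) i j
      = entryCLM i j (∫ θ in (0:ℝ)..(2 * Real.pi), g θ) := rfl
  rw [matIntI]
  show (∫ θ in (0:ℝ)..(2 * Real.pi), g θ i j) = _
  rw [h2, ← h]
  rfl

lemma cont_matrix_inv {p : ℕ} {f : ℝ → Matrix (Fin p) (Fin p) ℂ} (hf : Continuous f)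
    (h : ∀ θ, IsUnit (f θ)) : Continuous fun θ => (f θ)⁻¹ := by
  rw [continuous_iff_continuousAt]
  intro θ
  have hd : (f θ).det ≠ 0 := ((Matrix.isUnit_iff_isUnit_det _).mp (h θ)).ne_zero
  have hc : ContinuousAt Ring.inverse (f θ).det := by
    rw [Ring.inverse_eq_inv']
    exact continuousAt_inv₀ hd
  exact (continuousAt_matrix_inv _ hc).comp hf.continuousAt

lemma isUnit_conjT {p : ℕ} {M : Matrix (Fin p) (Fin p) ℂ} (h : IsUnit M) : IsUnit Mᴴ := by
  rw [Matrix.isUnit_iff_isUnit_det, Matrix.det_conjTranspose]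
  exact ((Matrix.isUnit_iff_isUnit_det _).mp h).star

lemma cont_z : Continuous fun θ : ℝ => Complex.exp (θ * Complex.I) :=
  Complex.continuous_exp.comp (Complex.continuous_ofReal.mul continuous_const)

lemma cont_poly {p : ℕ} (k : ℕ) (c : ℕ → Matrix (Fin p) (Fin p) ℂ) (e : ℕ → ℕ) :
    Continuous fun θ : ℝ => ∑ j ∈ range k, Complex.exp (θ * Complex.I) ^ (e j) • c j :=
  continuous_finset_sum _ fun j _ => (cont_z.pow _).smul continuous_const

lemma pow_sub_helper {u v : ℂ} (huv : u * v = 1) {j n : ℕ} (hj : j ≤ n) :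
    u ^ (n - j) = u ^ n * v ^ j := by
  have h : u ^ n = u ^ (n - j) * u ^ j := by rw [← pow_add, Nat.sub_add_cancel hj]
  rw [h, mul_assoc, ← mul_pow, huv, one_pow, mul_one]

lemma pointwise_key {p n : ℕ} (z : ℂ) (hz : ‖z‖ = 1)
    (A B R Lt Rt : Matrix (Fin p) (Fin p) ℂ)
    (hA : IsUnit A)
    (hLt : Lt = z ^ n • Aᴴ)
    (hRt : Rtᴴ = (starRingEnd ℂ z) ^ n • R)
    (hU : Lt⁻¹ * R ∈ Matrix.unitaryGroup (Fin p) ℂ) :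
    ‖z • (A * (Bᴴ * B)⁻¹ * Rtᴴ) - z • (Lt⁻¹ * R)‖
      = ‖A * B⁻¹ * Bᴴ⁻¹ * Aᴴ - 1‖ := by
  have hzc : z * starRingEnd ℂ z = 1 := by
    rw [Complex.mul_conj, Complex.normSq_eq_norm_sq, hz]; norm_num
  have hAd : IsUnit A.det := (Matrix.isUnit_iff_isUnit_det _).mp hA
  have hAHd : IsUnit Aᴴ.det := by
    rw [Matrix.det_conjTranspose]; exact hAd.star
  have hAH1 : Aᴴ * Aᴴ⁻¹ = 1 := Matrix.mul_nonsing_inv _ hAHd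
  have hLtinv : Lt⁻¹ = (starRingEnd ℂ z) ^ n • Aᴴ⁻¹ := by
    apply Matrix.inv_eq_right_inv
    rw [hLt, Matrix.smul_mul, Matrix.mul_smul, smul_smul, ← mul_pow, hzc, one_pow, one_smul, hAH1]
  have key : Aᴴ * (Aᴴ⁻¹ * R) = R := by rw [← Matrix.mul_assoc, hAH1, Matrix.one_mul]
  have hid : z • (A * (Bᴴ * B)⁻¹ * Rtᴴ) - z • (Lt⁻¹ * R)
      = (z * (starRingEnd ℂ z) ^ n) • ((A * B⁻¹ * Bᴴ⁻¹ * Aᴴ - 1) * (Aᴴ⁻¹ * R)) := by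
    rw [hRt, hLtinv, Matrix.mul_inv_rev]
    simp only [Matrix.sub_mul, Matrix.mul_smul, Matrix.smul_mul, smul_smul, Matrix.mul_assoc,
      key, Matrix.one_mul, smul_sub]
  have hWU : Aᴴ⁻¹ * R ∈ Matrix.unitaryGroup (Fin p) ℂ := by
    rw [Matrix.mem_unitaryGroup_iff] at hU ⊢
    rw [hLtinv] at hU
    simp only [Matrix.smul_mul, star_smul, Matrix.mul_smul, smul_smul] at hU
    have hc1 : star ((starRingEnd ℂ z) ^ n) * (starRingEnd ℂ z) ^ n = 1 := by
      simp only [star_pow, RCLike.star_def, Complex.conj_conj, ← mul_pow, hzc, one_pow]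
    rw [hc1, one_smul] at hU
    exact hU
  rw [hid, norm_smul]
  have hcn : ‖z * (starRingEnd ℂ z) ^ n‖ = 1 := by
    simp [norm_mul, norm_pow, hz, Complex.norm_conj]
  rw [hcn, one_mul]
  exact CStarRing.norm_mul_mem_unitary _ hWU

lemma real_smul_mat {p : ℕ} (r : ℝ) (M : Matrix (Fin p) (Fin p) ℂ) :
    r • M = (r : ℂ) • M := by
  ext i j
  simp [Complex.real_smul]

end Aux

/-- The matrix reflection coefficient satisfies
`‖H_{n+1}‖₂ ≤ (1/2π) ∫₀^{2π} ‖φ_n^L(z) [φ_{n+ℓ}^L(z)]⁻¹ ([φ_{n+ℓ}^L(z)]*)⁻¹ [φ_n^L(z)]* - I‖₂` dθ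
for every `ℓ ≥ 1`, given the integral representation of `-H_{n+1}`, the residue
identity, and the unitarity of `[φ̃_n^L(z)]⁻¹ φ_n^R(z)` on the unit circle. -/
theorem reflection_coefficient_norm_bound
    (p : ℕ) (n ℓ : ℕ) (hℓ : 1 ≤ ℓ)
    (aL aR : ℕ → ℕ → Matrix (Fin p) (Fin p) ℂ)
    (φL φR φLt φRt : ℕ → ℂ → Matrix (Fin p) (Fin p) ℂ)
    (hφL : ∀ m z, φL m z = ∑ j ∈ range (m + 1), z ^ j • aL m j)
    (hφR : ∀ m z, φR m z = ∑ j ∈ range (m + 1), z ^ j • aR m j)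
    (hφLt : ∀ m z, φLt m z = ∑ j ∈ range (m + 1), z ^ (m - j) • (aL m j)ᴴ)
    (hφRt : ∀ m z, φRt m z = ∑ j ∈ range (m + 1), z ^ (m - j) • (aR m j)ᴴ)
    (hunitL : ∀ m, ∀ z : ℂ, ‖z‖ = 1 → IsUnit (φL m z))
    (hunitLt : ∀ m, ∀ z : ℂ, ‖z‖ = 1 → IsUnit (φLt m z))
    (H : ℕ → Matrix (Fin p) (Fin p) ℂ)
    (hid : -(H (n + 1)) = (2 * Real.pi : ℝ)⁻¹ • matIntI
      (fun θ => Complex.exp (θ * Complex.I) •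
        (φL n (Complex.exp (θ * Complex.I)) *
          ((φL (n + ℓ) (Complex.exp (θ * Complex.I)))ᴴ *
            φL (n + ℓ) (Complex.exp (θ * Complex.I)))⁻¹ *
          (φRt n (Complex.exp (θ * Complex.I)))ᴴ)))
    (hres : matIntI (fun θ => Complex.exp (θ * Complex.I) •
      ((φLt n (Complex.exp (θ * Complex.I)))⁻¹ *
        φR n (Complex.exp (θ * Complex.I)))) = 0)
    (hU : ∀ z : ℂ, ‖z‖ = 1 →
      (φLt n z)⁻¹ * φR n z ∈ Matrix.unitaryGroup (Fin p) ℂ) :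
    sNorm (H (n + 1)) ≤ (2 * Real.pi)⁻¹ *
      ∫ θ in (0:ℝ)..(2 * Real.pi),
        sNorm (φL n (Complex.exp (θ * Complex.I)) *
          (φL (n + ℓ) (Complex.exp (θ * Complex.I)))⁻¹ *
          ((φL (n + ℓ) (Complex.exp (θ * Complex.I)))ᴴ)⁻¹ *
          (φL n (Complex.exp (θ * Complex.I)))ᴴ - 1) := by
  open scoped Matrix.Norms.L2Operator in
  have h2pi : (0:ℝ) < 2 * Real.pi := by positivity
  -- the circle parametrization
  set zf : ℝ → ℂ := fun θ => Complex.exp (θ * Complex.I) with hzf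
  have hz1 : ∀ θ : ℝ, ‖zf θ‖ = 1 := fun θ => Complex.norm_exp_ofReal_mul_I θ
  -- algebraic identities for the tilde polynomials on the circle
  have hLtφ : ∀ z : ℂ, ‖z‖ = 1 → φLt n z = z ^ n • (φL n z)ᴴ := by
    intro z hz
    have hzc : z * starRingEnd ℂ z = 1 := by
      rw [Complex.mul_conj, Complex.normSq_eq_norm_sq, hz]; norm_num
    rw [hφLt n z, hφL n z, Matrix.conjTranspose_sum, Finset.smul_sum]
    refine Finset.sum_congr rfl fun j hj => ?_
    have hjn : j ≤ n := Nat.lt_succ_iff.mp (Finset.mem_range.mp hj)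
    rw [Matrix.conjTranspose_smul, smul_smul]
    rw [pow_sub_helper hzc hjn, star_pow]
    rfl
  have hRtφ : ∀ z : ℂ, ‖z‖ = 1 →
      (φRt n z)ᴴ = (starRingEnd ℂ z) ^ n • φR n z := by
    intro z hz
    have hzc' : starRingEnd ℂ z * z = 1 := by
      rw [mul_comm, Complex.mul_conj, Complex.normSq_eq_norm_sq, hz]; norm_num
    rw [hφRt n z, hφR n z, Matrix.conjTranspose_sum, Finset.smul_sum]
    refine Finset.sum_congr rfl fun j hj => ?_
    have hjn : j ≤ n := Nat.lt_succ_iff.mp (Finset.mem_range.mp hj)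
    rw [Matrix.conjTranspose_smul, Matrix.conjTranspose_conjTranspose, smul_smul]
    rw [star_pow]
    congr 1
    exact pow_sub_helper hzc' hjn
  -- continuity of all the ingredients
  have contφL : ∀ m, Continuous fun θ => φL m (zf θ) := by
    intro m
    have : (fun θ => φL m (zf θ))
        = fun θ : ℝ => ∑ j ∈ range (m + 1), Complex.exp (θ * Complex.I) ^ j • aL m j :=
      funext fun θ => hφL m (zf θ)
    rw [this]
    exact cont_poly (m + 1) (aL m) id
  have contφR : Continuous fun θ => φR n (zf θ) := by
    have : (fun θ => φR n (zf θ))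
        = fun θ : ℝ => ∑ j ∈ range (n + 1), Complex.exp (θ * Complex.I) ^ j • aR n j :=
      funext fun θ => hφR n (zf θ)
    rw [this]
    exact cont_poly (n + 1) (aR n) id
  have contφLt : Continuous fun θ => φLt n (zf θ) := by
    have : (fun θ => φLt n (zf θ))
        = fun θ : ℝ => ∑ j ∈ range (n + 1),
            Complex.exp (θ * Complex.I) ^ (n - j) • (aL n j)ᴴ :=
      funext fun θ => hφLt n (zf θ)
    rw [this]
    exact cont_poly (n + 1) (fun j => (aL n j)ᴴ) (fun j => n - j)
  have contφRt : Continuous fun θ => φRt n (zf θ) := by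
    have : (fun θ => φRt n (zf θ))
        = fun θ : ℝ => ∑ j ∈ range (n + 1),
            Complex.exp (θ * Complex.I) ^ (n - j) • (aR n j)ᴴ :=
      funext fun θ => hφRt n (zf θ)
    rw [this]
    exact cont_poly (n + 1) (fun j => (aR n j)ᴴ) (fun j => n - j)
  -- the two integrands
  set f1 : ℝ → Matrix (Fin p) (Fin p) ℂ := fun θ => zf θ •
    (φL n (zf θ) * ((φL (n + ℓ) (zf θ))ᴴ * φL (n + ℓ) (zf θ))⁻¹ * (φRt n (zf θ))ᴴ) with hf1
  set f2 : ℝ → Matrix (Fin p) (Fin p) ℂ := fun θ => zf θ •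
    ((φLt n (zf θ))⁻¹ * φR n (zf θ)) with hf2
  have contf1 : Continuous f1 := by
    refine cont_z.smul ?_
    refine (((contφL n).mul ?_).mul contφRt.matrix_conjTranspose)
    refine cont_matrix_inv (((contφL (n + ℓ)).matrix_conjTranspose).mul (contφL (n + ℓ))) ?_
    intro θ
    exact (isUnit_conjT (hunitL (n + ℓ) _ (hz1 θ))).mul (hunitL (n + ℓ) _ (hz1 θ))
  have contf2 : Continuous f2 := by
    refine cont_z.smul ?_
    exact (cont_matrix_inv contφLt fun θ => hunitLt n _ (hz1 θ)).mul contφR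
  have hint1 : IntervalIntegrable f1 MeasureTheory.volume 0 (2 * Real.pi) :=
    contf1.intervalIntegrable _ _
  have hint2 : IntervalIntegrable f2 MeasureTheory.volume 0 (2 * Real.pi) :=
    contf2.intervalIntegrable _ _
  have hb1 : matIntI f1 = ∫ θ in (0:ℝ)..(2 * Real.pi), f1 θ := matIntI_eq_integral hint1
  have hb2 : matIntI f2 = ∫ θ in (0:ℝ)..(2 * Real.pi), f2 θ := matIntI_eq_integral hint2
  have hsub : (∫ θ in (0:ℝ)..(2 * Real.pi), (f1 θ - f2 θ)) = matIntI f1 := by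
    rw [intervalIntegral.integral_sub hint1 hint2, ← hb1, ← hb2, hres, sub_zero]
  -- the pointwise norm identity
  have hnorm : ∀ θ : ℝ, ‖f1 θ - f2 θ‖
      = sNorm (φL n (zf θ) * (φL (n + ℓ) (zf θ))⁻¹ * ((φL (n + ℓ) (zf θ))ᴴ)⁻¹ *
          (φL n (zf θ))ᴴ - 1) := by
    intro θ
    rw [sNorm_eq_norm]
    exact pointwise_key (zf θ) (hz1 θ) (φL n (zf θ)) (φL (n + ℓ) (zf θ)) (φR n (zf θ))
      (φLt n (zf θ)) (φRt n (zf θ)) (hunitL n _ (hz1 θ)) (hLtφ _ (hz1 θ)) (hRtφ _ (hz1 θ))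
      (hU _ (hz1 θ))
  -- putting it together
  have hMnorm : ‖matIntI f1‖ ≤ ∫ θ in (0:ℝ)..(2 * Real.pi),
      sNorm (φL n (zf θ) * (φL (n + ℓ) (zf θ))⁻¹ * ((φL (n + ℓ) (zf θ))ᴴ)⁻¹ *
        (φL n (zf θ))ᴴ - 1) := by
    rw [← hsub]
    refine le_trans (intervalIntegral.norm_integral_le_integral_norm h2pi.le) ?_
    refine le_of_eq (intervalIntegral.integral_congr fun θ _ => hnorm θ)
  have hfinal : sNorm (H (n + 1)) = (2 * Real.pi)⁻¹ * ‖matIntI f1‖ := by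
    rw [sNorm_eq_norm, ← norm_neg, hid, real_smul_mat, norm_smul]
    congr 1
    rw [Complex.norm_real]
    exact abs_of_pos (by positivity)
  rw [hfinal]
  exact mul_le_mul_of_nonneg_left hMnorm (by positivity)
end
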